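/- arXiv:1811.11766 — 3 statements merged into one kernel-verified Lean document; each statement's English description precedes it below -/
import Mathlib

section
/- For the dimensionally split scheme for the 2D acoustic equations with diffusion matrices D_x = [[a₁,0,a₂],[0,0,0],[a₃,0,a₄]] and D_y = [[0,0,0],[0,a₁,a₂],[0,a₃,a₄]], the determinant of the evolution matrix ℰ(k) vanishes for all (t_x, t_y) on the unit circle if and only if a₁ = 0. Here ℰ is the 3×3 matrix whose entries are: ℰ₁₁ = i·(-a₁(t_x-2+1/t_x))/(2Δx), ℰ₁₂ = 0, ℰ₁₃ = i·(-a₂(t_x-2+1/t_x)/(2Δx) + (t_x-1/t_x)/(2Δx ε²)), ℰ₂₁ = 0, ℰ₂₂ = i·(-a₁(t_y-2+1/t_y))/(2Δy), ℰ₂₃ = i·(-a₂(t_y-2+1/t_y)/(2Δy) + (t_y-1/t_y)/(2Δy ε²)), ℰ₃₁ = i·(-a₃(t_x-2+1/t_x)/(2Δx) + c²(t_x-1/t_x)/(2Δx)), ℰ₃₂ = i·(-a₃(t_y-2+1/t_y)/(2Δy) + c²(t_y-1/t_y)/(2Δy)), ℰ₃₃ = i·(-a₄(t_x-2+1/t_x)/(2Δx)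 - a₄(t_y-2+1/t_y)/(2Δy)). -/
/-!
If `a₁ = 0`, the first two columns of `ℰ` vanish outside the last row, so `ℰ` is singular.
Conversely, at `(t_x, t_y) = (-1, -1)` the dispersive parts `t - 1/t` vanish and the determinant
is a nonzero multiple of `a₁ (a₁ a₄ - a₂ a₃)`. At `(-1, i)` it is `a₁` times
`(a₁ a₄ - a₂ a₃)(2/Δx + 1/Δy) + (c²/ε² - i (a₂ c² + a₃/ε²))/Δy`, whose real part is
`c²/(ε² Δy) > 0` once `a₁ a₄ = a₂ a₃`.
-/

open Matrix Complex

theorem Matrix.det_fin_three_of_topLeft_diagonal {R : Type*} [CommRing R] (p q r s t w z : R) :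
    !![p, 0, q; 0, r, s; t, w, z].det = p * (r * z - s * w) - q * r * t := by
  rw [det_fin_three]
  simp only [of_apply, cons_val', cons_val_zero, cons_val_one, cons_val_two, head_cons,
    tail_cons, empty_val', cons_val_fin_one, head_fin_const]
  ring

noncomputable def evolutionMatrix (a₁ a₂ a₃ a₄ c ε Δx Δy : ℝ) (tx ty : ℂ) :
    Matrix (Fin 3) (Fin 3) ℂ :=
  !![I * (-(a₁:ℂ) * (tx - 2 + 1/tx)) / (2*Δx), 0,
       I * (-(a₂:ℂ) * (tx - 2 + 1/tx) / (2*Δx) + (tx - 1/tx) / (2*Δx*(ε:ℂ)^2));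
     0, I * (-(a₁:ℂ) * (ty - 2 + 1/ty)) / (2*Δy),
       I * (-(a₂:ℂ) * (ty - 2 + 1/ty) / (2*Δy) + (ty - 1/ty) / (2*Δy*(ε:ℂ)^2));
     I * (-(a₃:ℂ) * (tx - 2 + 1/tx) / (2*Δx) + (c:ℂ)^2 * (tx - 1/tx) / (2*Δx)),
     I * (-(a₃:ℂ) * (ty - 2 + 1/ty) / (2*Δy) + (c:ℂ)^2 * (ty - 1/ty) / (2*Δy)),
     I * (-(a₄:ℂ) * (tx - 2 + 1/tx) / (2*Δx) - (a₄:ℂ) * (ty - 2 + 1/ty) / (2*Δy))]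

section

variable (a₁ a₂ a₃ a₄ c ε Δx Δy : ℝ)

theorem det_evolutionMatrix_zero (tx ty : ℂ) :
    (evolutionMatrix 0 a₂ a₃ a₄ c ε Δx Δy tx ty).det = 0 := by
  simp [evolutionMatrix, det_fin_three_of_topLeft_diagonal]

theorem det_evolutionMatrix_neg_one_neg_one :
    (evolutionMatrix a₁ a₂ a₃ a₄ c ε Δx Δy (-1) (-1)).det =
      -8 * I * a₁ * (a₁ * a₄ - a₂ * a₃) * (Δx⁻¹ + Δy⁻¹) * Δx⁻¹ * Δy⁻¹ := by
  rw [evolutionMatrix, det_fin_three_of_topLeft_diagonal]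
  norm_num
  linear_combination 8 * I * a₁ * (a₁ * a₄ - a₂ * a₃) * (Δx⁻¹ + Δy⁻¹) * Δx⁻¹ * Δy⁻¹ * I_sq

theorem det_evolutionMatrix_neg_one_I :
    (evolutionMatrix a₁ a₂ a₃ a₄ c ε Δx Δy (-1) I).det =
      -2 * I * a₁ * Δx⁻¹ * Δy⁻¹ * ((a₁ * a₄ - a₂ * a₃) * (2 * Δx⁻¹ + Δy⁻¹)
        + (c ^ 2 / ε ^ 2 - I * (a₂ * c ^ 2 + a₃ / ε ^ 2)) * Δy⁻¹) := by
  rw [evolutionMatrix, det_fin_three_of_topLeft_diagonal]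
  norm_num
  linear_combination 2 * a₁ * Δx⁻¹ * Δy⁻¹ * (I * (a₁ * a₄ - a₂ * a₃) * (2 * Δx⁻¹ + Δy⁻¹)
    - I ^ 2 * (a₂ * c ^ 2 + a₃ / ε ^ 2) * Δy⁻¹ - I * (I ^ 2 - 1) * (c ^ 2 / ε ^ 2) * Δy⁻¹) * I_sq

theorem eq_zero_of_det_evolutionMatrix_neg_one_eq_zero (hc : c ≠ 0) (hε : ε ≠ 0)
    (hΔx : 0 < Δx) (hΔy : 0 < Δy)
    (h₁ : (evolutionMatrix a₁ a₂ a₃ a₄ c ε Δx Δy (-1) (-1)).det = 0)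
    (h₂ : (evolutionMatrix a₁ a₂ a₃ a₄ c ε Δx Δy (-1) I).det = 0) : a₁ = 0 := by
  rw [det_evolutionMatrix_neg_one_neg_one] at h₁
  rw [det_evolutionMatrix_neg_one_I] at h₂
  by_contra ha
  have hsum : (Δx : ℂ)⁻¹ + (Δy : ℂ)⁻¹ ≠ 0 := by exact_mod_cast (by positivity : Δx⁻¹ + Δy⁻¹ ≠ 0)
  have hK : (a₁ * a₄ - a₂ * a₃ : ℂ) = 0 := by
    simpa [ha, hsum, hΔx.ne', hΔy.ne', I_ne_zero] using h₁
  have hW : (c ^ 2 / ε ^ 2 - I * (a₂ * c ^ 2 + a₃ / ε ^ 2) : ℂ) = 0 := by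
    simpa [hK, ha, hΔx.ne', hΔy.ne', I_ne_zero] using h₂
  have hre : ((c ^ 2 / ε ^ 2 : ℝ) : ℂ) = I * ((a₂ * c ^ 2 + a₃ / ε ^ 2 : ℝ) : ℂ) := by
    push_cast
    linear_combination hW
  have hre' := congrArg re hre
  simp only [ofReal_re, I_mul_re, ofReal_im, neg_zero] at hre'
  exact (by positivity : c ^ 2 / ε ^ 2 ≠ 0) hre'

end

/-- The determinant of the evolution matrix of the dimensionally split acoustic
scheme vanishes for all `t_x, t_y` on the unit circle iff `a₁ = 0`. -/
theorem dimsplit_det_vanishes_iff (a₁ a₂ a₃ a₄ c ε Δx Δy : ℝ)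
    (hc : 0 < c) (hε : 0 < ε) (hΔx : 0 < Δx) (hΔy : 0 < Δy)
    (E : ℂ → ℂ → Matrix (Fin 3) (Fin 3) ℂ)
    (hE : ∀ tx ty : ℂ, E tx ty =
      !![I * (-(a₁:ℂ) * (tx - 2 + 1/tx)) / (2*Δx), 0,
           I * (-(a₂:ℂ) * (tx - 2 + 1/tx) / (2*Δx) + (tx - 1/tx) / (2*Δx*(ε:ℂ)^2));
         0, I * (-(a₁:ℂ) * (ty - 2 + 1/ty)) / (2*Δy),
           I * (-(a₂:ℂ) * (ty - 2 + 1/ty) / (2*Δy) + (ty - 1/ty) / (2*Δy*(ε:ℂ)^2));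
         I * (-(a₃:ℂ) * (tx - 2 + 1/tx) / (2*Δx) + (c:ℂ)^2 * (tx - 1/tx) / (2*Δx)),
         I * (-(a₃:ℂ) * (ty - 2 + 1/ty) / (2*Δy) + (c:ℂ)^2 * (ty - 1/ty) / (2*Δy)),
         I * (-(a₄:ℂ) * (tx - 2 + 1/tx) / (2*Δx) - (a₄:ℂ) * (ty - 2 + 1/ty) / (2*Δy))]) :
    (∀ tx ty : ℂ, ‖tx‖ = 1 → ‖ty‖ = 1 →
      (E tx ty).det = 0) ↔ a₁ = 0 := by
  obtain rfl : E = evolutionMatrix a₁ a₂ a₃ a₄ c ε Δx Δy := funext₂ hE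
  constructor
  · intro h
    exact eq_zero_of_det_evolutionMatrix_neg_one_eq_zero a₁ a₂ a₃ a₄ c ε Δx Δy hc.ne' hε.ne'
      hΔx hΔy (h (-1) (-1) (by simp) (by simp)) (h (-1) I (by simp) (by simp))
  · rintro rfl tx ty - -
    exact det_evolutionMatrix_zero a₂ a₃ a₄ c ε Δx Δy tx ty
end

section
/- With a₁ = 0, the vector w = ( a₃(t_y-2+1/t_y)/(2Δy) - c²(t_y-1/t_y)/(2Δy), -a₃(t_x-2+1/t_x)/(2Δx) + c²(t_x-1/t_x)/(2Δx), 0 ) satisfies ℰ(t_x,t_y) · w = 0 for all nonzero complex t_x, t_y, where ℰ is the evolution matrix of the dimensionally split acoustic scheme with a₁ = 0. -/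
open Matrix Complex

/-- With `a₁ = 0`, the vector `w` (the Fourier transform of the preserved
discrete divergence) lies in the kernel of the evolution matrix of the
dimensionally split acoustic scheme, for all nonzero `t_x, t_y`. -/
theorem dimsplit_kernel_vector (a₂ a₃ a₄ c ε Δx Δy : ℝ)
    (hε : ε ≠ 0) (hΔx : 0 < Δx) (hΔy : 0 < Δy)
    (tx ty : ℂ) (htx : tx ≠ 0) (hty : ty ≠ 0)
    (E : Matrix (Fin 3) (Fin 3) ℂ)
    (hE : E =
      !![0, 0,
           I * (-(a₂:ℂ) * (tx - 2 + 1/tx) / (2*Δx) + (tx - 1/tx) / (2*Δx*(ε:ℂ)^2));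
         0, 0,
           I * (-(a₂:ℂ) * (ty - 2 + 1/ty) / (2*Δy) + (ty - 1/ty) / (2*Δy*(ε:ℂ)^2));
         I * (-(a₃:ℂ) * (tx - 2 + 1/tx) / (2*Δx) + (c:ℂ)^2 * (tx - 1/tx) / (2*Δx)),
         I * (-(a₃:ℂ) * (ty - 2 + 1/ty) / (2*Δy) + (c:ℂ)^2 * (ty - 1/ty) / (2*Δy)),
         I * (-(a₄:ℂ) * (tx - 2 + 1/tx) / (2*Δx) - (a₄:ℂ) * (ty - 2 + 1/ty) / (2*Δy))])
    (w : Fin 3 → ℂ)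
    (hw : w = ![(a₃:ℂ) * (ty - 2 + 1/ty) / (2*Δy) - (c:ℂ)^2 * (ty - 1/ty) / (2*Δy),
                -(a₃:ℂ) * (tx - 2 + 1/tx) / (2*Δx) + (c:ℂ)^2 * (tx - 1/tx) / (2*Δx),
                0]) :
    E.mulVec w = 0 := by
  subst hE hw
  funext i
  fin_cases i <;>
    simp [mulVec, dotProduct, Fin.sum_univ_three] <;> ring
end

section
/- Consistency of the discrete divergence: for smooth functions u, v : ℝ² → ℝ, the averaged divergence 𝒟(u,v)(x,y) = [ (u(x+Δx,y+Δy)+2u(x+Δx,y)+u(x+Δx,y-Δy)) - (u(x-Δx,y+Δy)+2u(x-Δx,y)+u(x-Δx,y-Δy)) ]/(8Δx) + [ (v(x+Δx,y+Δy)+2v(x,y+Δy)+v(x-Δx,y+Δy)) - (v(x+Δx,y-Δy)+2v(x,y-Δy)+v(x-Δx,y-Δy)) ]/(8Δy) converges to ∂_x u(x,y) + ∂_y v(x,y) as (Δx, Δy) → (0,0) with Δx, Δy > 0, provided u and v are continuously differentiable (C¹). -/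
/-!
Each of the two fractions is a `1, 2, 1`-weighted average of three central differences
`(f (p + s w) - f (p - s w)) / (2 s)` whose base points `p` move towards `(x, y)` together with
the step. Since a `C¹` function is strictly differentiable, such central differences still converge
to the directional derivative `f' w`, and so does their average.
-/

open Filter Topology Asymptotics

section CentralDifference

variable {𝕜 E F α : Type*} [NontriviallyNormedField 𝕜] [NormedAddCommGroup E] [NormedSpace 𝕜 E]
  [NormedAddCommGroup F] [NormedSpace 𝕜 F] {f : E → F} {f' : E →L[𝕜] F} {a : E} {l : Filter α}

theorem HasStrictFDerivAt.tendsto_inv_smul_sub (hf : HasStrictFDerivAt f f' a) (w : E)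
    {p q : α → E} {t : α → 𝕜} (hp : Tendsto p l (𝓝 a)) (hq : Tendsto q l (𝓝 a))
    (hpq : ∀ i, p i - q i = t i • w) (ht : ∀ᶠ i in l, t i ≠ 0) :
    Tendsto (fun i => (t i)⁻¹ • (f (p i) - f (q i))) l (𝓝 (f' w)) := by
  have hrem : (fun i => f (p i) - f (q i) - f' (p i - q i)) =o[l] fun i => p i - q i :=
    hf.isLittleO.comp_tendsto (hp.prodMk_nhds hq)
  have hstep : (fun i => p i - q i) =O[l] t := by
    refine .of_bound ‖w‖ (.of_forall fun i => ?_)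
    rw [hpq, norm_smul, mul_comm]
  have hlim := (hrem.trans_isBigO hstep).tendsto_inv_smul_nhds_zero.add_const (f' w)
  rw [zero_add] at hlim
  refine hlim.congr' (ht.mono fun i hti => ?_)
  rw [hpq, map_smul, smul_sub, inv_smul_smul₀ hti, sub_add_cancel]

variable [CharZero 𝕜]

theorem HasStrictFDerivAt.tendsto_centralDifference (hf : HasStrictFDerivAt f f' a) (w : E)
    {s : α → 𝕜} {b : α → E} (hs : Tendsto s l (𝓝 0)) (hs₀ : ∀ᶠ i in l, s i ≠ 0)
    (hb : Tendsto b l (𝓝 0)) :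
    Tendsto (fun i => (2 * s i)⁻¹ • (f (a + s i • w + b i) - f (a - s i • w + b i))) l
      (𝓝 (f' w)) := by
  have hshift : ∀ c : 𝕜, Tendsto (fun i => a + (c * s i) • w + b i) l (𝓝 a) := fun c => by
    simpa using ((hs.const_mul c).smul_const w).const_add a |>.add hb
  have hplus : Tendsto (fun i => a + s i • w + b i) l (𝓝 a) := by simpa using hshift 1
  have hminus : Tendsto (fun i => a - s i • w + b i) l (𝓝 a) := by
    simpa [sub_eq_add_neg] using hshift (-1)
  exact hf.tendsto_inv_smul_sub w hplus hminus (fun i => by module)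
    (hs₀.mono fun i hi => mul_ne_zero two_ne_zero hi)

def averagedCentralDifference (f : E → F) (a w e : E) (s r : 𝕜) : F :=
  (8 * s)⁻¹ • ((f (a + s • w + r • e) + (2 : 𝕜) • f (a + s • w) + f (a + s • w - r • e)) -
    (f (a - s • w + r • e) + (2 : 𝕜) • f (a - s • w) + f (a - s • w - r • e)))

theorem HasStrictFDerivAt.tendsto_averagedCentralDifference (hf : HasStrictFDerivAt f f' a)
    (w e : E) {s r : α → 𝕜} (hs : Tendsto s l (𝓝 0)) (hs₀ : ∀ᶠ i in l, s i ≠ 0)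
    (hr : Tendsto r l (𝓝 0)) :
    Tendsto (fun i => averagedCentralDifference f a w e (s i) (r i)) l (𝓝 (f' w)) := by
  have hre : Tendsto (fun i => r i • e) l (𝓝 0) := by simpa using hr.smul_const e
  have hplus := hf.tendsto_centralDifference w hs hs₀ hre
  have hmid := hf.tendsto_centralDifference w hs hs₀ tendsto_const_nhds
  have hminus := hf.tendsto_centralDifference w hs hs₀ (by simpa using hre.neg)
  have hsum := ((hplus.add (hmid.const_smul (2 : 𝕜))).add hminus).const_smul (4 : 𝕜)⁻¹
  convert hsum using 2 with i
  · simp only [averagedCentralDifference, add_zero, ← sub_eq_add_neg]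
    module
  · module

end CentralDifference

/-- The averaged divergence is a consistent discretization of
`∂ₓu + ∂_y v` for `C¹` functions `u, v`. -/
theorem averaged_divergence_consistency (u v : ℝ × ℝ → ℝ)
    (hu : ContDiff ℝ 1 u) (hv : ContDiff ℝ 1 v) (x y : ℝ) :
    Tendsto (fun d : ℝ × ℝ =>
      ((u (x + d.1, y + d.2) + 2 * u (x + d.1, y) + u (x + d.1, y - d.2))
        - (u (x - d.1, y + d.2) + 2 * u (x - d.1, y) + u (x - d.1, y - d.2))) / (8 * d.1)
      + ((v (x + d.1, y + d.2) + 2 * v (x, y + d.2) + v (x - d.1, y + d.2))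
        - (v (x + d.1, y - d.2) + 2 * v (x, y - d.2) + v (x - d.1, y - d.2))) / (8 * d.2))
      (𝓝[Set.Ioi 0 ×ˢ Set.Ioi 0] (0, 0))
      (𝓝 (fderiv ℝ u (x, y) (1, 0) + fderiv ℝ v (x, y) (0, 1))) := by
  have hfst : Tendsto Prod.fst (𝓝[Set.Ioi 0 ×ˢ Set.Ioi 0] ((0 : ℝ), (0 : ℝ))) (𝓝 0) :=
    tendsto_nhdsWithin_of_tendsto_nhds continuous_fst.continuousAt
  have hsnd : Tendsto Prod.snd (𝓝[Set.Ioi 0 ×ˢ Set.Ioi 0] ((0 : ℝ), (0 : ℝ))) (𝓝 0) :=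
    tendsto_nhdsWithin_of_tendsto_nhds continuous_snd.continuousAt
  have hpos : ∀ᶠ d : ℝ × ℝ in 𝓝[Set.Ioi 0 ×ˢ Set.Ioi 0] (0, 0), 0 < d.1 ∧ 0 < d.2 :=
    eventually_mem_nhdsWithin
  have hu' := ((hu.contDiffAt (x := (x, y))).hasStrictFDerivAt one_ne_zero)
    |>.tendsto_averagedCentralDifference (1, 0) (0, 1) hfst (hpos.mono fun _ hd => hd.1.ne') hsnd
  have hv' := ((hv.contDiffAt (x := (x, y))).hasStrictFDerivAt one_ne_zero)
    |>.tendsto_averagedCentralDifference (0, 1) (1, 0) hsnd (hpos.mono fun _ hd => hd.2.ne') hfst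
  refine (hu'.add hv').congr fun d => ?_
  simp only [averagedCentralDifference, Prod.smul_mk, smul_eq_mul, mul_one, mul_zero,
    Prod.mk_add_mk, Prod.mk_sub_mk, add_zero, sub_zero, div_eq_inv_mul]
end
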